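/- arXiv:1901.10432 — 4 statements merged into one kernel-verified Lean document; each statement's English description precedes it below -/
import Mathlib

section
/- Let X be a ℤ²-subshift and let H be an open or closed half plane in ℝ². Then either H X-codes all of ℝ², or H X-codes no point of ℤ² \ H. In particular, if some subset of H X-codes some point of ℤ² \ H, then H X-codes all of ℝ². -/
namespace PolygonalShifts

abbrev Z2 : Type := ℤ × ℤ

abbrev Config (A : Type*) : Type _ := Z2 → A

/-- The translation action of `ℤ²` on configurations. -/
def shiftAct {A : Type*} (u : Z2) (x : Config A) : Config A := fun w => x (u + w)

/-- A `ℤ²`-subshift: a closed (for the product topology, with the alphabet discrete)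
and translation-invariant set of configurations. -/
def IsSubshift {A : Type*} (X : Set (Config A)) : Prop :=
  (letI : TopologicalSpace A := ⊥
   IsClosed X) ∧
  ∀ u : Z2, ∀ x ∈ X, shiftAct u x ∈ X

/-- The canonical embedding `ℤ² → ℝ²`. -/
def toR2 (p : Z2) : ℝ × ℝ := ((p.1 : ℝ), (p.2 : ℝ))

/-- `S` X-codes `S'`, for subsets `S, S'` of `ℝ²`. -/
def Codes {A : Type*} (X : Set (Config A)) (S S' : Set (ℝ × ℝ)) : Prop :=
  ∀ x ∈ X, ∀ x' ∈ X,
    (∀ p : Z2, toR2 p ∈ S → x p = x' p) →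
    ∀ p : Z2, toR2 p ∈ S' → x p = x' p

/-- `S` X-codes `S'`, for subsets `S, S'` of `ℤ²`. -/
def CodesZ {A : Type*} (X : Set (Config A)) (S S' : Set Z2) : Prop :=
  ∀ x ∈ X, ∀ x' ∈ X, (∀ p ∈ S, x p = x' p) → ∀ p ∈ S', x p = x' p

/-- `Y` is a recoding of `X` via the finite set `F ⊆ ℤ²`. -/
def IsRecodingVia {A A' : Type*} (X : Set (Config A)) (Y : Set (Config A'))
    (F : Set Z2) : Prop :=
  letI : TopologicalSpace A := ⊥
  letI : TopologicalSpace A' := ⊥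
  ∃ Ψ : X ≃ₜ Y,
    (∀ (u : Z2) (x x' : X), (x' : Config A) = shiftAct u (x : Config A) →
      (↑(Ψ x') : Config A') = shiftAct u (↑(Ψ x) : Config A')) ∧
    (∀ (u : Z2) (x x' : X),
      (↑(Ψ x) : Config A') u = (↑(Ψ x') : Config A') u ↔
        ∀ f ∈ F, (x : Config A) (f + u) = (x' : Config A) (f + u))

/-- `Y` is a recoding of `X`. -/
def IsRecoding {A A' : Type*} (X : Set (Config A)) (Y : Set (Config A')) : Prop :=
  ∃ F : Set Z2, F.Finite ∧ IsRecodingVia X Y F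

/-- Integer cross product. -/
def crossZ (u v : Z2) : ℤ := u.1 * v.2 - u.2 * v.1

/-- Real cross product. -/
def crossR (u v : ℝ × ℝ) : ℝ := u.1 * v.2 - u.2 * v.1

/-- A convex integer polygon, given by its (at least three) vertices listed in
counterclockwise order: every vertex lies strictly to the left of every directed edge. -/
structure IntPolygon where
  n : ℕ
  vert : Fin (n + 3) → Z2
  convex : ∀ i j : Fin (n + 3), j ≠ i → j ≠ i + 1 →
    0 < crossZ (vert (i + 1) - vert i) (vert j - vert i)

namespace IntPolygon

/-- The oriented edge vector from vertex `i` to vertex `i+1`. -/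
def edgeVec (P : IntPolygon) (i : Fin (P.n + 3)) : Z2 := P.vert (i + 1) - P.vert i

/-- The polygon as a subset of `ℝ²` (the convex hull of its vertices). -/
def carrier (P : IntPolygon) : Set (ℝ × ℝ) :=
  convexHull ℝ (Set.range fun i => toR2 (P.vert i))

lemma crossZ_smul (m : ℤ) (u v : Z2) : crossZ (m • u) (m • v) = m ^ 2 * crossZ u v := by
  simp only [crossZ, Prod.smul_fst, Prod.smul_snd, smul_eq_mul]
  ring

/-- The dilation of a polygon by a positive integer factor about the origin. -/
def dilate (P : IntPolygon) (m : ℤ) (hm : 0 < m) : IntPolygon where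
  n := P.n
  vert := fun i => m • P.vert i
  convex := by
    intro i j hj hj1
    have h := P.convex i j hj hj1
    have e1 : m • P.vert (i + 1) - m • P.vert i = m • (P.vert (i + 1) - P.vert i) :=
      (smul_sub m _ _).symm
    have e2 : m • P.vert j - m • P.vert i = m • (P.vert j - P.vert i) :=
      (smul_sub m _ _).symm
    rw [e1, e2, crossZ_smul]
    exact mul_pos (pow_pos hm 2) h

end IntPolygon

/-- `P` is a coding polygon for `X`: for each vertex `w`, the polygon with `w`
removed X-codes `w`. -/
def IsCodingPolygon {A : Type*} (X : Set (Config A)) (P : IntPolygon) : Prop :=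
  ∀ i : Fin (P.n + 3),
    Codes X (P.carrier \ {toR2 (P.vert i)}) {toR2 (P.vert i)}

/-- `X` is polygonal with respect to `P`. -/
def Polygonal {A : Type*} (X : Set (Config A)) (P : IntPolygon) : Prop :=
  X.Infinite ∧ IsCodingPolygon X P

/-- The closed half plane `H_v = {w : v₁ w₂ − v₂ w₁ ≥ 0}` to the left of the direction `v`. -/
def leftHalfPlane (v : ℝ × ℝ) : Set (ℝ × ℝ) := {w | 0 ≤ v.1 * w.2 - v.2 * w.1}

/-- The ray directed by `v` is expansive for `X`: `H_v` X-codes all of `ℝ²`. -/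
def ExpansiveRay {A : Type*} (X : Set (Config A)) (v : ℝ × ℝ) : Prop :=
  Codes X (leftHalfPlane v) Set.univ

/-- For a primitive integer direction `v`, the line `L₀`: the translate of `L = ℝ·v`
by an integer vector, lying outside `H_v` and closest to `L`. -/
def lineL0 (v : Z2) : Set (ℝ × ℝ) := {w | (v.1 : ℝ) * w.2 - (v.2 : ℝ) * w.1 = -1}

/-- A block of `m` consecutive lattice points on `L₀`, starting at `z`. -/
def blockOn (v z : Z2) (m : ℕ) : Set (ℝ × ℝ) :=
  (fun k : ℕ => toR2 (z + (k : ℤ) • v)) '' {k | k < m}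

/-- The (nonexpansive) rational ray directed by the primitive vector `v` is closing for `X`. -/
def ClosingRay {A : Type*} (X : Set (Config A)) (v : Z2) : Prop :=
  ∃ N : ℕ, ∀ z : Z2, v.1 * z.2 - v.2 * z.1 = -1 →
    ∀ m : ℕ, N ≤ m →
      Codes X (leftHalfPlane (toR2 v) ∪ blockOn v z m) (lineL0 v)

/-- The sector (with vertex the origin) determined by the rays through `e₁` and `e₂`:
lattice points on either ray or strictly between them. -/
def SectorZ (e₁ e₂ : Z2) : Set Z2 :=
  {p | SameRay ℝ (toR2 e₁) (toR2 p) ∨ SameRay ℝ (toR2 e₂) (toR2 p) ∨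
       (0 < crossZ e₁ p ∧ 0 < crossZ p e₂)}

/-- The rational sector determined by `(e₁, e₂)` is corner coding for `X`. -/
def IsCornerCoding {A : Type*} (X : Set (Config A)) (e₁ e₂ : Z2) : Prop :=
  CodesZ X (SectorZ e₁ e₂ \ {0}) {0}

/-- The rational sector determined by `(e₁, e₂)` is weakly corner coding for `X`. -/
def IsWeaklyCornerCoding {A : Type*} (X : Set (Config A)) (e₁ e₂ : Z2) : Prop :=
  ∃ F₀ : Set Z2, F₀.Finite ∧ F₀ ⊆ SectorZ e₁ e₂ ∧
    ∀ F : Set Z2, F.Finite → F ⊆ SectorZ e₁ e₂ →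
      CodesZ X (SectorZ e₁ e₂ \ F) (SectorZ e₁ e₂ \ F₀)

/-- The sector based at the vertex `i` of the polygon `P`: lattice points in the convex
cone with apex `P.vert i` spanned by the two edges of `P` incident to that vertex. -/
def vertexSector (P : IntPolygon) (i : Fin (P.n + 3)) : Set Z2 :=
  {p | ∃ s t : ℝ, 0 ≤ s ∧ 0 ≤ t ∧
    toR2 p = toR2 (P.vert i) + s • toR2 (P.vert (i - 1) - P.vert i)
      + t • toR2 (P.vert (i + 1) - P.vert i)}

/-- `P` is a coding polygon for some recoding of `X`. -/
def HasRecodingPolygon {A : Type*} (X : Set (Config A)) (P : IntPolygon) : Prop :=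
  ∃ (A' : Type) (_ : Fintype A') (Y : Set (Config A')),
    IsSubshift Y ∧ IsRecoding X Y ∧ IsCodingPolygon Y P

/-- `P` is a minimal recoding polygon for `X`. -/
def IsMinimalRecodingPolygon {A : Type*} (X : Set (Config A)) (P : IntPolygon) : Prop :=
  HasRecodingPolygon X P ∧
  (∀ Q : IntPolygon, HasRecodingPolygon X Q → P.n ≤ Q.n) ∧
  (∀ Q : IntPolygon, HasRecodingPolygon X Q → Q.n = P.n →
    Q.carrier ⊆ P.carrier → Q.carrier = P.carrier)


/-- A (closed or open) half plane in `ℝ²`. -/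
def IsHalfPlane (H : Set (ℝ × ℝ)) : Prop :=
  ∃ a b c : ℝ, (a, b) ≠ (0, 0) ∧
    (H = {w : ℝ × ℝ | a * w.1 + b * w.2 ≥ c} ∨ H = {w : ℝ × ℝ | a * w.1 + b * w.2 > c})

/-!
If `H` codes a lattice point `p ∉ H`, compactness of `X` lets a finite window `F ⊆ H` code `p`.
Since `F` is finite, it lies a positive distance `γ` beyond `p` in the direction normal to `H`.
Translates of this coding relation push agreement on a half plane `γ` further out at each step,
so after finitely many steps agreement reaches any given lattice point.
-/

open Set Filter Topology Pointwise

lemma codes_iff_codesZ {A : Type*} (X : Set (Config A)) (S S' : Set (ℝ × ℝ)) :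
    Codes X S S' ↔ CodesZ X (toR2 ⁻¹' S) (toR2 ⁻¹' S') :=
  Iff.rfl

lemma _root_.Set.Finite.exists_pos_forall_add_le {ι : Type*} {F : Set ι} (hF : F.Finite)
    {f : ι → ℝ} {t : ℝ} (h : ∀ w ∈ F, t < f w) : ∃ γ > 0, ∀ w ∈ F, t + γ ≤ f w := by
  have hsmall : ∀ᶠ γ in 𝓝[>] (0 : ℝ), ∀ w ∈ F, t + γ ≤ f w :=
    hF.eventually_all.2 fun w hw => nhdsWithin_le_nhds <|
      (eventually_le_nhds (sub_pos.2 (h w hw))).mono fun γ hγ => by linarith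
  obtain ⟨γ, hγ, hpos⟩ := (hsmall.and self_mem_nhdsWithin).exists
  exact ⟨γ, hpos, hγ⟩

namespace CodesZ

variable {A : Type*} {X : Set (Config A)} {S S' S'' T T' : Set Z2}

lemma of_subset (h : S' ⊆ S) : CodesZ X S S' :=
  fun _ _ _ _ hagree q hq => hagree q (h hq)

lemma mono (h : CodesZ X S S') (hS : S ⊆ T) (hT : T' ⊆ S') : CodesZ X T T' :=
  fun x hx x' hx' hagree q hq => h x hx x' hx' (fun w hw => hagree w (hS hw)) q (hT hq)

lemma trans (h : CodesZ X S S') (h' : CodesZ X S' S'') : CodesZ X S S'' :=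
  fun x hx x' hx' hagree => h' x hx x' hx' (h x hx x' hx' hagree)

lemma iUnion {ι : Sort*} {T : ι → Set Z2} (h : ∀ i, CodesZ X S (T i)) :
    CodesZ X S (⋃ i, T i) := by
  intro x hx x' hx' hagree q hq
  obtain ⟨i, hi⟩ := mem_iUnion.1 hq
  exact h i x hx x' hx' hagree q hi

lemma vadd (hshift : ∀ u : Z2, ∀ x ∈ X, shiftAct u x ∈ X) (h : CodesZ X S S') (u : Z2) :
    CodesZ X (u +ᵥ S) (u +ᵥ S') := by
  rintro x hx x' hx' hagree _ ⟨q, hq, rfl⟩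
  exact h _ (hshift u x hx) _ (hshift u x' hx') (fun w hw => hagree _ (vadd_mem_vadd_set hw)) q hq

lemma exists_finite_subset [Finite A]
    (hX : letI : TopologicalSpace A := ⊥; IsClosed X) {p : Z2} (h : CodesZ X S {p}) :
    ∃ F ⊆ S, F.Finite ∧ CodesZ X F {p} := by
  let _ : TopologicalSpace A := ⊥
  have : DiscreteTopology A := ⟨rfl⟩
  have hcont : ∀ w : Z2, Continuous fun z : Config A × Config A => (z.1 w, z.2 w) := fun w =>
    ((continuous_apply w).comp continuous_fst).prodMk ((continuous_apply w).comp continuous_snd)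
  set K := (X ×ˢ X) ∩ {z : Config A × Config A | z.1 p ≠ z.2 p}
  have hK : IsCompact K :=
    ((hX.prod hX).inter ((isClosed_discrete {q : A × A | q.1 ≠ q.2}).preimage (hcont p))).isCompact
  have hcover : K ⊆ ⋃ w ∈ S, {z : Config A × Config A | z.1 w ≠ z.2 w} := by
    rintro ⟨x, x'⟩ ⟨⟨hx, hx'⟩, hne⟩
    by_contra hnot
    simp only [mem_iUnion, mem_ofPred_eq, not_exists, not_not] at hnot
    exact hne (h x hx x' hx' hnot p rfl)
  obtain ⟨F, hFS, hF, hKF⟩ := hK.elim_finite_subcover_image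
    (fun w _ => (isOpen_discrete {q : A × A | q.1 ≠ q.2}).preimage (hcont w)) hcover
  refine ⟨F, hFS, hF, ?_⟩
  rintro x hx x' hx' hagree _ rfl
  by_contra hne
  obtain ⟨w, hw, hxw⟩ := mem_iUnion₂.1 (hKF (a := (x, x')) ⟨⟨hx, hx'⟩, hne⟩)
  exact hxw (hagree w hw)

end CodesZ

section Sweep

variable {A : Type*} {X : Set (Config A)} (hshift : ∀ u : Z2, ∀ x ∈ X, shiftAct u x ∈ X)
  (φ : Z2 →+ ℝ) {F : Set Z2} {p : Z2}
include hshift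

lemma codesZ_superlevel_step {γ : ℝ} (hcode : CodesZ X F {p}) (hgap : ∀ w ∈ F, φ p + γ ≤ φ w)
    (t s : ℝ) : CodesZ X {q | t < φ q + s} {q | t < φ q + (s + γ)} := by
  intro x hx x' hx' hagree q hq
  refine hcode.vadd hshift (q - p) x hx x' hx' ?_ q ⟨p, rfl, sub_add_cancel q p⟩
  rintro _ ⟨w, hw, rfl⟩
  apply hagree
  simp only [mem_ofPred_eq, vadd_eq_add, map_add, map_sub] at hq ⊢
  linarith [hgap w hw]

lemma codesZ_univ_of_gap {γ : ℝ} (hγ : 0 < γ) (hcode : CodesZ X F {p})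
    (hgap : ∀ w ∈ F, φ p + γ ≤ φ w) (t : ℝ) : CodesZ X {q | t < φ q} univ := by
  have hiter : ∀ n : ℕ, CodesZ X {q | t < φ q} {q | t < φ q + n * γ} := by
    intro n
    induction n with
    | zero => exact CodesZ.of_subset (by simp)
    | succ n ih =>
      convert ih.trans (codesZ_superlevel_step hshift φ hcode hgap t (n * γ)) using 4
      push_cast
      ring
  refine (CodesZ.iUnion hiter).mono subset_rfl fun q _ => mem_iUnion.2 ?_
  obtain ⟨n, hn⟩ := exists_nat_gt ((t - φ q) / γ)
  exact ⟨n, by rw [div_lt_iff₀ hγ] at hn; simp only [mem_ofPred_eq]; linarith⟩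

lemma codesZ_univ_of_finite (hF : F.Finite) (hcode : CodesZ X F {p})
    (hlt : ∀ w ∈ F, φ p < φ w) (t : ℝ) : CodesZ X {q | t < φ q} univ := by
  obtain ⟨γ, hγ, hgap⟩ := hF.exists_pos_forall_add_le hlt
  exact codesZ_univ_of_gap hshift φ hγ hcode hgap t

end Sweep

lemma IsHalfPlane.exists_addMonoidHom {H : Set (ℝ × ℝ)} (hH : IsHalfPlane H) :
    ∃ (φ : Z2 →+ ℝ) (c : ℝ), {q | c < φ q} ⊆ toR2 ⁻¹' H ∧
      ∀ p w, toR2 p ∉ H → toR2 w ∈ H → φ p < φ w := by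
  obtain ⟨a, b, c, -, rfl | rfl⟩ := hH <;>
  refine ⟨AddMonoidHom.mk' (fun w => a * w.1 + b * w.2) fun u v => by
    simp only [Prod.fst_add, Prod.snd_add]; push_cast; ring, c,
    fun q hq => ?_, fun p w hp hw => ?_⟩ <;>
  simp only [mem_ofPred_eq, mem_preimage, AddMonoidHom.mk'_apply, toR2, not_le, not_lt,
    ge_iff_le, gt_iff_lt] at * <;>
  linarith

lemma IsHalfPlane.codes_univ_of_codes_not_mem {A : Type*} [Finite A] {X : Set (Config A)}
    (hX : IsSubshift X) {H : Set (ℝ × ℝ)} (hH : IsHalfPlane H) {p : Z2} (hp : toR2 p ∉ H)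
    (hcode : Codes X H {toR2 p}) : Codes X H univ := by
  obtain ⟨φ, c, hsub, hlt⟩ := hH.exists_addMonoidHom
  obtain ⟨F, hFH, hF, hFp⟩ :=
    (((codes_iff_codesZ X _ _).1 hcode).mono subset_rfl fun _ => congrArg toR2).exists_finite_subset
      hX.1
  exact (codesZ_univ_of_finite hX.2 φ hF hFp (fun w hw => hlt p w hp (hFH hw)) c).mono hsub
    (subset_univ _)

theorem statement1_general {A : Type} [Fintype A] (X : Set (Config A))
    (hX : IsSubshift X) (H : Set (ℝ × ℝ)) (hH : IsHalfPlane H) :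
    (Codes X H Set.univ ∨ ∀ p : Z2, toR2 p ∉ H → ¬ Codes X H {toR2 p}) ∧
    ((∃ S : Set (ℝ × ℝ), S ⊆ H ∧ ∃ p : Z2, toR2 p ∉ H ∧ Codes X S {toR2 p}) →
      Codes X H Set.univ) := by
  refine ⟨or_iff_not_imp_left.2 fun hnot p hp hcode =>
    hnot (hH.codes_univ_of_codes_not_mem hX hp hcode), ?_⟩
  rintro ⟨S, hSH, p, hp, hcode⟩
  exact hH.codes_univ_of_codes_not_mem hX hp
    (((codes_iff_codesZ X _ _).1 hcode).mono (preimage_mono hSH) subset_rfl)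

/-- a half plane either X-codes all of `ℝ²` or codes no point of `ℤ² \ H`;
in particular if a subset of `H` X-codes some point of `ℤ² \ H` then `H` X-codes `ℝ²`. -/
theorem statement1 {A : Type} [Fintype A] [Nonempty A] (X : Set (Config A))
    (hX : IsSubshift X) (H : Set (ℝ × ℝ)) (hH : IsHalfPlane H) :
    (Codes X H Set.univ ∨ ∀ p : Z2, toR2 p ∉ H → ¬ Codes X H {toR2 p}) ∧
    ((∃ S : Set (ℝ × ℝ), S ⊆ H ∧ ∃ p : Z2, toR2 p ∉ H ∧ Codes X S {toR2 p}) →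
      Codes X H Set.univ) :=
  statement1_general X hX H hH

end PolygonalShifts
end

section
/- Let X be a ℤ²-subshift, let L be a line in ℝ², and let H and H' be the two closed half planes whose common boundary is L (so H ∪ H' = ℝ²). If H X-codes all of ℝ², then there exists r > 0 such that the closed strip N_r(H) = {u ∈ H : dist(u, L) ≤ r} X-codes all of H'. -/
namespace PolygonalShifts

/-- Euclidean distance from `u` to the line `{w : a w₁ + b w₂ = c}`. -/
noncomputable def distLine (a b c : ℝ) (u : ℝ × ℝ) : ℝ :=
  |a * u.1 + b * u.2 - c| / Real.sqrt (a ^ 2 + b ^ 2)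

/-!
Since `H` codes `ℝ²`, it codes a lattice point `q` just outside `H`, and by compactness of the
subshift a finite set `F ⊆ H`, lying within bounded distance of `L`, already codes `q`.
Translating by `w - q` moves this to any lattice point `w ∈ H'`: `w` is coded by a set lying
at least `dist(q, L)` farther into `H` than `w`, but not beyond a fixed strip along `L`.
Induction on the distance from `w` to `H` then shows that this strip codes `H'`.
-/

lemma CodesZ.exists_finset {A : Type*} [TopologicalSpace A] [DiscreteTopology A] [Finite A]
    {X : Set (Config A)} (hX : IsClosed X) {S : Set Z2} {p : Z2} (h : CodesZ X S {p}) :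
    ∃ F : Finset Z2, ↑F ⊆ S ∧ CodesZ X ↑F {p} := by
  have hclosed (P : Set (A × A)) : IsClosed {z : Config A × Config A | (z.1 p, z.2 p) ∈ P} :=
    (isClosed_discrete P).preimage (by fun_prop)
  let K : Set (Config A × Config A) := X ×ˢ X ∩ {z | z.1 p ≠ z.2 p}
  let agreeAt (f : S) : Set (Config A × Config A) := {z | z.1 f = z.2 f}
  have hK : IsCompact K := ((hX.prod hX).inter (hclosed {w | w.1 ≠ w.2})).isCompact
  have hdisj : K ∩ ⋂ f, agreeAt f = ∅ := by
    refine Set.eq_empty_of_forall_notMem fun z ⟨⟨⟨hz₁, hz₂⟩, hne⟩, hagree⟩ => hne ?_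
    exact h z.1 hz₁ z.2 hz₂ (fun f hf => Set.mem_iInter.mp hagree ⟨f, hf⟩) p rfl
  obtain ⟨u, hu⟩ := hK.elim_finite_subfamily_closed agreeAt
    (fun f => isClosed_eq (by fun_prop) (by fun_prop)) hdisj
  refine ⟨u.map (Function.Embedding.subtype _), by simp, ?_⟩
  rintro x hx x' hx' hagree _ rfl
  by_contra hne
  have hmem : (x, x') ∈ K ∩ ⋂ f ∈ u, agreeAt f :=
    ⟨⟨⟨hx, hx'⟩, hne⟩, Set.mem_iInter₂.mpr fun f hf => hagree f (by simpa using hf)⟩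
  rw [hu] at hmem
  exact hmem

lemma AddMonoidHom.exists_map_lt {G : Type*} [AddGroup G] {φ : G →+ ℝ} (hφ : φ ≠ 0) (c : ℝ) :
    ∃ g, φ g < c := by
  obtain ⟨e, he⟩ : ∃ e, φ e ≠ 0 := by simpa [DFunLike.ext_iff] using hφ
  obtain ⟨g, hg⟩ : ∃ g, φ g < 0 := by
    rcases he.lt_or_gt with he | he
    · exact ⟨e, he⟩
    · exact ⟨-e, by simpa using he⟩
  obtain ⟨n, hn⟩ := exists_nat_gt (c / φ g)
  exact ⟨n • g, by rwa [map_nsmul, nsmul_eq_mul, ← div_lt_iff_of_neg hg]⟩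

lemma codesZ_halfPlane_of_codesZ_point {A : Type*} {X : Set (Config A)}
    (hshift : ∀ u : Z2, ∀ x ∈ X, shiftAct u x ∈ X) (φ : Z2 →+ ℝ) {c d : ℝ} {F : Set Z2}
    {q : Z2} (hF : CodesZ X F {q}) (hFφ : ∀ f ∈ F, c ≤ φ f ∧ φ f ≤ d) (hq : φ q < c)
    (hcd : c ≤ d) :
    CodesZ X {w | c ≤ φ w ∧ φ w ≤ d + (c - φ q)} {w | φ w ≤ c} := by
  intro x hx x' hx' hband
  set δ := c - φ q with hδ_def
  have hδ : 0 < δ := sub_pos.mpr hq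
  have hlevel : ∀ n : ℕ, ∀ w, c - n * δ ≤ φ w → φ w ≤ d + δ → x w = x' w := by
    intro n
    induction n with
    | zero => exact fun w h₁ h₂ => hband w ⟨by simpa using h₁, h₂⟩
    | succ n ih =>
      intro w h₁ h₂
      by_cases hw : c - n * δ ≤ φ w
      · exact ih w hw h₂
      push Not at hw
      have hnδ : 0 ≤ (n : ℝ) * δ := by positivity
      have htranslate := hF (shiftAct (w - q) x) (hshift _ x hx) (shiftAct (w - q) x')
        (hshift _ x' hx') ?_ q rfl
      · simpa [shiftAct] using htranslate
      intro f hf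
      have hφf : φ (w - q + f) = φ w + δ + φ f - c := by
        rw [map_add, map_sub, hδ_def]
        ring
      obtain ⟨hf₁, hf₂⟩ := hFφ f hf
      push_cast [add_mul] at h₁
      exact ih _ (by rw [hφf]; linarith) (by rw [hφf]; linarith)
  intro w (hw : φ w ≤ c)
  obtain ⟨n, hn⟩ := exists_nat_gt ((c - φ w) / δ)
  rw [div_lt_iff₀ hδ] at hn
  exact hlevel n w (by linarith) (by linarith)

def linForm (a b : ℝ) : Z2 →+ ℝ where
  toFun p := a * p.1 + b * p.2
  map_zero' := by simp
  map_add' u v := by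
    simp only [Prod.fst_add, Prod.snd_add, Int.cast_add]
    ring

lemma linForm_apply (a b : ℝ) (p : Z2) :
    linForm a b p = a * (toR2 p).1 + b * (toR2 p).2 := rfl

lemma linForm_ne_zero {a b : ℝ} (hab : (a, b) ≠ (0, 0)) : linForm a b ≠ 0 := by
  intro h
  have ha : linForm a b (1, 0) = 0 := by rw [h]; rfl
  have hb : linForm a b (0, 1) = 0 := by rw [h]; rfl
  simp only [linForm, AddMonoidHom.coe_mk, ZeroHom.coe_mk] at ha hb
  exact hab (by simp_all)

lemma distLine_of_le {a b c : ℝ} {u : ℝ × ℝ} (h : c ≤ a * u.1 + b * u.2) :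
    distLine a b c u = (a * u.1 + b * u.2 - c) / Real.sqrt (a ^ 2 + b ^ 2) := by
  rw [distLine, abs_of_nonneg (sub_nonneg.mpr h)]

theorem statement2_general {A : Type} [Fintype A] (X : Set (Config A))
    (hX : IsSubshift X) (a b c : ℝ) (hab : (a, b) ≠ (0, 0))
    (hH : Codes X {w : ℝ × ℝ | a * w.1 + b * w.2 ≥ c} Set.univ) :
    ∃ r > (0 : ℝ), Codes X
      {u : ℝ × ℝ | a * u.1 + b * u.2 ≥ c ∧ distLine a b c u ≤ r}
      {w : ℝ × ℝ | a * w.1 + b * w.2 ≤ c} := by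
  let : TopologicalSpace A := ⊥
  have : DiscreteTopology A := ⟨rfl⟩
  obtain ⟨q, hq⟩ := AddMonoidHom.exists_map_lt (linForm_ne_zero hab) c
  obtain ⟨F, hFH, hF⟩ := CodesZ.exists_finset hX.1 (S := {w | c ≤ linForm a b w}) (p := q)
    fun x hx x' hx' hagree p _ => hH x hx x' hx' hagree p trivial
  obtain ⟨d, hcd, hFd⟩ : ∃ d, c ≤ d ∧ ∀ f ∈ F, linForm a b f ≤ d := by
    obtain ⟨M, hM⟩ := (F.image (linForm a b)).bddAbove
    exact ⟨max c M, le_max_left c M,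
      fun f hf => le_max_of_le_right (hM (Finset.mem_image_of_mem _ hf))⟩
  have hband := codesZ_halfPlane_of_codesZ_point hX.2 (linForm a b) hF
    (fun f hf => ⟨hFH hf, hFd f hf⟩) hq hcd
  have hs : 0 < Real.sqrt (a ^ 2 + b ^ 2) := Real.sqrt_pos.mpr <| by
    contrapose! hab
    simp only [Prod.mk.injEq]
    constructor <;> nlinarith [sq_nonneg a, sq_nonneg b]
  refine ⟨(d - linForm a b q) / Real.sqrt (a ^ 2 + b ^ 2), div_pos (by linarith) hs, ?_⟩
  refine fun x hx x' hx' hagree => hband x hx x' hx' fun w ⟨hw₁, hw₂⟩ => hagree w ⟨hw₁, ?_⟩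
  rw [distLine_of_le hw₁, ← linForm_apply]
  exact div_le_div_of_nonneg_right (by linarith) hs.le

/-- if the closed half plane `H = {φ ≥ c}` X-codes all of `ℝ²`, then
some closed strip `N_r(H) = {u ∈ H : dist(u, L) ≤ r}` X-codes the opposite closed
half plane `H' = {φ ≤ c}`. -/
theorem statement2 {A : Type} [Fintype A] [Nonempty A] (X : Set (Config A))
    (hX : IsSubshift X) (a b c : ℝ) (hab : (a, b) ≠ (0, 0))
    (hH : Codes X {w : ℝ × ℝ | a * w.1 + b * w.2 ≥ c} Set.univ) :
    ∃ r > (0 : ℝ), Codes X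
      {u : ℝ × ℝ | a * u.1 + b * u.2 ≥ c ∧ distLine a b c u ≤ r}
      {w : ℝ × ℝ | a * w.1 + b * w.2 ≤ c} :=
  statement2_general X hX a b c hab hH

end PolygonalShifts
end

section
/- Let X be a ℤ²-subshift and let P be a coding polygon for X. If ℓ is a nonexpansive ray for X, then ℓ is positively parallel to an oriented edge of P (that is, a translate of that edge lies in ℓ with matching orientation). -/
namespace PolygonalShifts

/-!
Suppose no edge of `P` is positively parallel to `v`. Then the linear form `w ↦ v × w`,
which is nonnegative exactly on `H_v`, attains its minimum over `P` at a single vertex `w₀`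
(a minimum along a whole edge would force that edge, oriented counterclockwise, to point
along `v`). Since `P` contains finitely many lattice points, all the others lie at height
at least `δ > 0` above `w₀`. Translating the coding property of `w₀` therefore lets the
values on `{v × w ≥ -nδ}` determine those on `{v × w ≥ -(n+1)δ}`, and by induction `H_v`
codes the whole plane.
-/

open Topology

lemma toR2_add (a b : Z2) : toR2 (a + b) = toR2 a + toR2 b := by
  simp only [toR2, Prod.fst_add, Prod.snd_add, Int.cast_add, Prod.mk_add_mk]

lemma toR2_zero : toR2 0 = 0 := by
  simp [toR2]

lemma toR2_neg (a : Z2) : toR2 (-a) = -toR2 a := by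
  simp only [toR2, Prod.fst_neg, Prod.snd_neg, Int.cast_neg, Prod.neg_mk]

lemma toR2_sub (a b : Z2) : toR2 (a - b) = toR2 a - toR2 b := by
  rw [sub_eq_add_neg, toR2_add, toR2_neg, ← sub_eq_add_neg]

lemma isClosedEmbedding_toR2 : IsClosedEmbedding toR2 :=
  Int.isClosedEmbedding_coe_real.prodMap Int.isClosedEmbedding_coe_real

lemma toR2_injective : Function.Injective toR2 :=
  isClosedEmbedding_toR2.injective

lemma finite_setOf_toR2_mem {K : Set (ℝ × ℝ)} (hK : IsCompact K) :
    {p : Z2 | toR2 p ∈ K}.Finite :=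
  (isClosedEmbedding_toR2.isCompact_preimage hK).finite_of_discrete

lemma crossR_toR2 (a b : Z2) : crossR (toR2 a) (toR2 b) = crossZ a b := by
  simp only [crossR, crossZ, toR2]
  push_cast
  ring

def crossRLinear (v : ℝ × ℝ) : ℝ × ℝ →ₗ[ℝ] ℝ where
  toFun := crossR v
  map_add' a b := by
    simp only [crossR, Prod.fst_add, Prod.snd_add]
    ring
  map_smul' c a := by
    simp only [crossR, Prod.smul_fst, Prod.smul_snd, smul_eq_mul, RingHom.id_apply]
    ring

lemma crossR_add_right (v a b : ℝ × ℝ) : crossR v (a + b) = crossR v a + crossR v b :=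
  (crossRLinear v).map_add a b

lemma crossR_sub_right (v a b : ℝ × ℝ) : crossR v (a - b) = crossR v a - crossR v b :=
  (crossRLinear v).map_sub a b

lemma sameRay_of_crossR_eq_zero {v a b : ℝ × ℝ} (hva : crossR v a = 0)
    (hab : 0 < crossR a b) (hvb : 0 ≤ crossR v b) : SameRay ℝ a v := by
  have key : crossR v b • a = crossR a b • v := by
    simp only [crossR] at hva ⊢
    ext <;> simp only [Prod.smul_fst, Prod.smul_snd, smul_eq_mul]
    · linear_combination b.1 * hva
    · linear_combination b.2 * hva
  rcases hvb.eq_or_lt with hvb | hvb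
  · rw [← hvb, zero_smul, eq_comm, smul_eq_zero] at key
    exact key.resolve_left hab.ne' ▸ SameRay.zero_right a
  · exact Or.inr (Or.inr ⟨_, _, hvb, hab, key⟩)

lemma lt_apply_of_mem_convexHull {E : Type*} [AddCommGroup E] [Module ℝ E] (φ : E →ₗ[ℝ] ℝ)
    {s : Set E} {x₀ y : E} (hs : ∀ x ∈ s, x ≠ x₀ → φ x₀ < φ x)
    (hy : y ∈ convexHull ℝ s) (hyx₀ : y ≠ x₀) : φ x₀ < φ y := by
  set t := s \ {x₀}
  have ht : ∀ x ∈ t, φ x₀ < φ x := fun x hx => hs x hx.1 hx.2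
  have hy' : y ∈ convexHull ℝ (insert x₀ t) :=
    convexHull_mono (Set.subset_insert_sdiff_singleton x₀ s) hy
  rcases t.eq_empty_or_nonempty with ht₀ | ht₀
  · rw [ht₀, insert_empty_eq, convexHull_singleton] at hy'
    exact absurd hy' hyx₀
  rw [convexHull_insert ht₀, convexJoin_singleton_left, Set.mem_iUnion₂] at hy'
  obtain ⟨z, hz, a, b, ha, hb, hab, rfl⟩ := hy'
  have hφz : φ x₀ < φ z :=
    convexHull_min ht (convex_halfSpace_gt φ.isLinear (φ x₀)) hz
  rcases hb.eq_or_lt with rfl | hb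
  · rw [add_zero] at hab
    simp [hab] at hyx₀
  · rw [map_add, map_smul, map_smul, smul_eq_mul, smul_eq_mul, eq_sub_of_add_eq hab]
    linarith [mul_pos hb (sub_pos.2 hφz)]

lemma exists_pos_forall_le_of_finite {α : Type*} {s : Set α} (hs : s.Finite) (g : α → ℝ)
    (hg : ∀ a ∈ s, 0 < g a) : ∃ δ > 0, ∀ a ∈ s, δ ≤ g a := by
  rcases s.eq_empty_or_nonempty with rfl | hne
  · exact ⟨1, one_pos, by simp⟩
  obtain ⟨a₀, ha₀, hmin⟩ := s.exists_min_image g hs hne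
  exact ⟨g a₀, hg a₀ ha₀, hmin⟩

namespace IntPolygon

variable (P : IntPolygon)

lemma add_one_add_one_ne (i : Fin (P.n + 3)) : i + 1 + 1 ≠ i := by
  rw [add_assoc, Ne, add_eq_left, Fin.ext_iff, Fin.val_add, Fin.val_one]
  simp [Nat.mod_eq_of_lt (show 2 < P.n + 3 by omega)]

lemma isCompact_carrier : IsCompact P.carrier :=
  (Set.finite_range _).isCompact_convexHull ℝ

/-- The edge leaving `i` goes weakly up in the direction transverse to `v`, while `vert j`
lies strictly to its left. -/
lemma sameRay_vert_sub_vert {v : ℝ × ℝ} {i j : Fin (P.n + 3)}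
    (hi : ∀ k, crossR v (toR2 (P.vert i)) ≤ crossR v (toR2 (P.vert k)))
    (hj : ∀ k, crossR v (toR2 (P.vert j)) ≤ crossR v (toR2 (P.vert k)))
    (hji : j ≠ i) (hj₁ : j ≠ i + 1) : SameRay ℝ (toR2 (P.vert i - P.vert j)) v := by
  refine sameRay_of_crossR_eq_zero (b := toR2 (P.edgeVec i)) ?_ ?_ ?_
  · rw [toR2_sub, crossR_sub_right, sub_eq_zero]
    exact le_antisymm (hi j) (hj i)
  · have hswap : crossZ (P.vert i - P.vert j) (P.edgeVec i)
        = crossZ (P.edgeVec i) (P.vert j - P.vert i) := by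
      simp only [crossZ, Prod.fst_sub, Prod.snd_sub]
      ring
    rw [crossR_toR2, hswap]
    exact_mod_cast P.convex i j hji hj₁
  · rw [edgeVec, toR2_sub, crossR_sub_right, sub_nonneg]
    exact hi (i + 1)

lemma exists_vertex_forall_lt {v : ℝ × ℝ} (hv : v ≠ 0)
    (hedge : ∀ k, ¬ SameRay ℝ (toR2 (P.edgeVec k)) v) :
    ∃ i, ∀ j ≠ i, crossR v (toR2 (P.vert i)) < crossR v (toR2 (P.vert j)) := by
  obtain ⟨i, hi⟩ := Finite.exists_min fun k => crossR v (toR2 (P.vert k))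
  refine ⟨i, fun j hji => (hi j).lt_of_ne fun heq => ?_⟩
  have hj : ∀ k, crossR v (toR2 (P.vert j)) ≤ crossR v (toR2 (P.vert k)) := heq ▸ hi
  by_cases hj₁ : j = i + 1
  · subst hj₁
    exact hedge i (P.sameRay_vert_sub_vert hj hi hji.symm (P.add_one_add_one_ne i).symm)
  by_cases hi₁ : i = j + 1
  · subst hi₁
    exact hedge j (P.sameRay_vert_sub_vert hi hj hji (P.add_one_add_one_ne j).symm)
  -- Otherwise `vert i - vert j` would point both along `v` and against it.
  have hij := P.sameRay_vert_sub_vert hi hj hji hj₁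
  have hji' := P.sameRay_vert_sub_vert hj hi hji.symm hi₁
  rw [← neg_sub, toR2_neg] at hji'
  have hzero := eq_zero_of_sameRay_self_neg (hij.trans hji'.symm fun hv0 => absurd hv0 hv)
  have hconv := P.convex i j hji hj₁
  rw [← neg_sub (P.vert i) (P.vert j), toR2_injective (hzero.trans toR2_zero.symm)] at hconv
  simp [crossZ] at hconv

lemma exists_pos_add_le_crossR {v : ℝ × ℝ} {i : Fin (P.n + 3)}
    (hi : ∀ j ≠ i, crossR v (toR2 (P.vert i)) < crossR v (toR2 (P.vert j))) :
    ∃ δ > 0, ∀ q : Z2, toR2 q ∈ P.carrier \ {toR2 (P.vert i)} →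
      crossR v (toR2 (P.vert i)) + δ ≤ crossR v (toR2 q) := by
  have hlt : ∀ q : Z2, toR2 q ∈ P.carrier \ {toR2 (P.vert i)} →
      crossR v (toR2 (P.vert i)) < crossR v (toR2 q) := by
    refine fun q hq => lt_apply_of_mem_convexHull (crossRLinear v) ?_ hq.1 hq.2
    rintro _ ⟨j, rfl⟩ hj
    exact hi j (ne_of_apply_ne (toR2 ∘ P.vert) hj)
  obtain ⟨δ, hδ, hle⟩ := exists_pos_forall_le_of_finite
    ((finite_setOf_toR2_mem P.isCompact_carrier).subset fun q hq => hq.1)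
    (fun q => crossR v (toR2 q) - crossR v (toR2 (P.vert i))) fun q hq => sub_pos.2 (hlt q hq)
  exact ⟨δ, hδ, fun q hq => by linarith [hle q hq]⟩

end IntPolygon

/-- Translates of `S` propagate agreement downwards from `H_v`, one layer of height `δ` at a
time. -/
lemma expansiveRay_of_codes {A : Type*} {X : Set (Config A)}
    (hX : ∀ u : Z2, ∀ x ∈ X, shiftAct u x ∈ X) {v : ℝ × ℝ} {S : Set (ℝ × ℝ)} {w : Z2}
    (hS : Codes X S {toR2 w}) {δ : ℝ} (hδ : 0 < δ)
    (hgap : ∀ q : Z2, toR2 q ∈ S → crossR v (toR2 w) + δ ≤ crossR v (toR2 q)) :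
    ExpansiveRay X v := by
  intro x hx x' hx' hagree
  have hlayer : ∀ n : ℕ, ∀ r : Z2, -(n * δ) ≤ crossR v (toR2 r) → x r = x' r := by
    intro n
    induction n with
    | zero =>
      intro r hr
      apply hagree r
      simpa [leftHalfPlane, crossR] using hr
    | succ n ih =>
      intro r hr
      have hshift := hS _ (hX (r - w) x hx) _ (hX (r - w) x' hx') (fun q hq => ih _ ?_) w rfl
      · simpa [shiftAct] using hshift
      · have hq := hgap q hq
        rw [toR2_add, toR2_sub, crossR_add_right, crossR_sub_right]
        push_cast at hr
        linarith
  intro p _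
  obtain ⟨n, hn⟩ := exists_nat_ge (-crossR v (toR2 p) / δ)
  rw [div_le_iff₀ hδ] at hn
  exact hlayer n p (by linarith)

theorem statement3_general {A : Type} (X : Set (Config A))
    (hX : IsSubshift X) (P : IntPolygon) (hP : IsCodingPolygon X P)
    (v : ℝ × ℝ) (hv : v ≠ 0) (hne : ¬ ExpansiveRay X v) :
    ∃ i : Fin (P.n + 3), SameRay ℝ (toR2 (P.edgeVec i)) v := by
  by_contra! hedge
  obtain ⟨i, hi⟩ := P.exists_vertex_forall_lt hv hedge
  obtain ⟨δ, hδ, hgap⟩ := P.exists_pos_add_le_crossR hi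
  exact hne (expansiveRay_of_codes hX.2 (hP i) hδ hgap)

/-- a nonexpansive ray for `X` is positively parallel to an oriented
edge of any coding polygon `P` for `X`. -/
theorem statement3 {A : Type} [Fintype A] [Nonempty A] (X : Set (Config A))
    (hX : IsSubshift X) (P : IntPolygon) (hP : IsCodingPolygon X P)
    (v : ℝ × ℝ) (hv : v ≠ 0) (hne : ¬ ExpansiveRay X v) :
    ∃ i : Fin (P.n + 3), SameRay ℝ (toR2 (P.edgeVec i)) v :=
  statement3_general X hX P hP v hv hne

end PolygonalShifts
end

section
/- Let X be a ℤ²-subshift, let S be a rational sector (with vertex at the origin) that is corner coding for X, and let Y be a recoding of X. Then S is corner coding for Y. -/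
namespace PolygonalShifts

open scoped Pointwise

section Coding

variable {A A' : Type*} {X : Set (Config A)} {Y : Set (Config A')}

theorem CodesZ.vadd_s9 (hX : ∀ u : Z2, ∀ x ∈ X, shiftAct u x ∈ X) {S S' : Set Z2}
    (h : CodesZ X S S') (u : Z2) : CodesZ X (u +ᵥ S) (u +ᵥ S') := by
  rintro x hx x' hx' hagree _ ⟨p, hp, rfl⟩
  exact h _ (hX u x hx) _ (hX u x' hx')
    (fun q hq => hagree _ (Set.vadd_mem_vadd_set hq)) p hp

/-- Agreement of two points of `Y` at `p` is agreement of their preimages on `F + p`. -/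
theorem IsRecodingVia.codesZ {F S S' : Set Z2} (hrec : IsRecodingVia X Y F)
    (h : ∀ f ∈ F, CodesZ X (f +ᵥ S) (f +ᵥ S')) : CodesZ Y S S' := by
  let : TopologicalSpace A := ⊥
  let : TopologicalSpace A' := ⊥
  obtain ⟨Ψ, -, hΨ⟩ := hrec
  intro y hy y' hy' hagree p hp
  obtain ⟨x, hx⟩ := Ψ.surjective ⟨y, hy⟩
  obtain ⟨x', hx'⟩ := Ψ.surjective ⟨y', hy'⟩
  have hagreeX (q : Z2) (hq : q ∈ S) (f : Z2) (hf : f ∈ F) :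
      (x : Config A) (f + q) = (x' : Config A) (f + q) :=
    (hΨ q x x').mp (by simpa [hx, hx'] using hagree q hq) f hf
  have hcodes : ∀ f ∈ F, (x : Config A) (f + p) = (x' : Config A) (f + p) := by
    intro f hf
    refine h f hf _ x.2 _ x'.2 ?_ _ (Set.vadd_mem_vadd_set hp)
    rintro _ ⟨q, hq, rfl⟩
    exact hagreeX q hq f hf
  simpa [hx, hx'] using (hΨ p x x').mpr hcodes

theorem IsRecodingVia.codesZ_of_shiftInvariant (hX : ∀ u : Z2, ∀ x ∈ X, shiftAct u x ∈ X)
    {F S S' : Set Z2} (hrec : IsRecodingVia X Y F) (h : CodesZ X S S') : CodesZ Y S S' :=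
  hrec.codesZ fun f _ => h.vadd_s9 hX f

end Coding

theorem statement9_general {A A' : Type}
    (X : Set (Config A)) (Y : Set (Config A'))
    (hX : IsSubshift X) (hrec : IsRecoding X Y)
    (e₁ e₂ : Z2)
    (hcc : IsCornerCoding X e₁ e₂) :
    IsCornerCoding Y e₁ e₂ := by
  obtain ⟨F, -, hrecF⟩ := hrec
  exact hrecF.codesZ_of_shiftInvariant hX.2 hcc

/-- a rational sector that is corner coding for `X` is corner coding
for any recoding `Y` of `X`. -/
theorem statement9 {A A' : Type} [Fintype A] [Nonempty A] [Fintype A'] [Nonempty A']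
    (X : Set (Config A)) (Y : Set (Config A'))
    (hX : IsSubshift X) (hY : IsSubshift Y) (hrec : IsRecoding X Y)
    (e₁ e₂ : Z2) (he₁ : e₁ ≠ 0) (he₂ : e₂ ≠ 0) (hor : 0 < crossZ e₁ e₂)
    (hcc : IsCornerCoding X e₁ e₂) :
    IsCornerCoding Y e₁ e₂ :=
  statement9_general X Y hX hrec e₁ e₂ hcc

end PolygonalShifts
end
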